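/- arXiv:1805.01766 — 4 statements merged into one kernel-verified Lean document; each statement's English description precedes it below -/
import Mathlib

section
/- Let u ∈ L¹(Ω) on a measure space Ω and let f, f_ν : Ω × ℝ → ℝ be measurable functions, all L-Lipschitz in the second variable uniformly in the first. Suppose that for every ω ∈ ℝ, f_ν(·,ω) → f(·,ω) in L¹_loc(Ω), and f_ν(·,0) → f(·,0) in L¹(Ω). Then ∫_Ω |f_ν(z, u(z)) − f(z, u(z))| dz → 0 as ν → ∞. -/
/-!
Put `F ν z a = fν ν z a - f z a`, so that each `F ν z` is `2L`-Lipschitz. For a simple function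
`s` the integral of `|F ν z (s z)|` splits over the fibres of `s`: the fibres over nonzero values
have finite measure, so local convergence applies there, and on the fibre over `0` the integrand
is `|F ν z 0|`, controlled by global convergence. A general integrable `u` is approximated in
`L¹` by such an `s`, at a cost of `2L ∫ |u - s|` uniformly in `ν`.
-/

open MeasureTheory Filter Topology Function
open scoped NNReal ENNReal

theorem LipschitzWith.norm_le_norm_add_mul_norm_sub {E G : Type*} [SeminormedAddCommGroup E]
    [SeminormedAddCommGroup G] {K : ℝ≥0} {g : E → G} (hg : LipschitzWith K g) (a b : E) :
    ‖g a‖ ≤ ‖g b‖ + K * ‖a - b‖ :=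
  norm_le_norm_add_const_of_dist_le (by simpa only [dist_eq_norm] using hg.dist_le_mul a b)

theorem MeasureTheory.Integrable.exists_simpleFunc_integral_norm_sub_lt {Ω E : Type*}
    [MeasurableSpace Ω] {μ : Measure Ω} [NormedAddCommGroup E] {u : Ω → E}
    (hu : Integrable u μ) {δ : ℝ} (hδ : 0 < δ) :
    ∃ s : SimpleFunc Ω E, Integrable s μ ∧ ∫ z, ‖u z - s z‖ ∂μ < δ := by
  obtain ⟨s, hus, hs⟩ := (memLp_one_iff_integrable.2 hu).exists_simpleFunc_eLpNorm_sub_lt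
    ENNReal.one_ne_top (ENNReal.ofReal_pos.2 hδ).ne'
  have hsi : Integrable s μ := memLp_one_iff_integrable.1 hs
  refine ⟨s, hsi, ?_⟩
  have hmeas : AEStronglyMeasurable (u - ⇑s) μ := (hu.sub hsi).aestronglyMeasurable
  have := ENNReal.toReal_lt_of_lt_ofReal hus
  rwa [toReal_eLpNorm hmeas, lpNorm_one_eq_integral_norm hmeas] at this

namespace MeasureTheory

theorem norm_comp_simpleFunc_le {Ω E G : Type*} [MeasurableSpace Ω] [Zero E] [DecidableEq E]
    [SeminormedAddGroup G] (F : Ω → E → G) (s : SimpleFunc Ω E) (z : Ω) :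
    ‖F z (s z)‖ ≤ ‖F z 0‖ +
      ∑ c ∈ s.range.erase 0, (s ⁻¹' {c}).indicator (fun y => ‖F y c‖) z := by
  by_cases hz : s z = 0
  · simp [hz, Set.indicator]
  · simp [Set.indicator, Finset.sum_ite_eq, hz]

variable {Ω E G : Type*} [MeasurableSpace Ω] {μ : Measure Ω}
  [NormedAddCommGroup E] [MeasurableSpace E] [NormedAddCommGroup G] [MeasurableSpace G]
  [OpensMeasurableSpace G] {K : ℝ≥0}

section Composition

variable {F : Ω → E → G}

theorem integrable_norm_comp_of_lipschitzWith (hF : Measurable (uncurry F))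
    (hLip : ∀ z, LipschitzWith K (F z)) {v w : Ω → E} (hv : AEMeasurable v μ)
    (hvw : Integrable (fun z => v z - w z) μ) (hw : Integrable (fun z => ‖F z (w z)‖) μ) :
    Integrable (fun z => ‖F z (v z)‖) μ :=
  (hw.add (hvw.norm.const_mul K)).mono'
    (hF.comp_aemeasurable (aemeasurable_id.prodMk hv)).norm.aestronglyMeasurable
    (ae_of_all _ fun z => by
      simpa only [norm_norm, Pi.add_apply] using
        (hLip z).norm_le_norm_add_mul_norm_sub (v z) (w z))

theorem integral_norm_comp_le_of_lipschitzWith (hF : Measurable (uncurry F))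
    (hLip : ∀ z, LipschitzWith K (F z)) {v w : Ω → E} (hv : AEMeasurable v μ)
    (hw : AEMeasurable w μ) (hvw : Integrable (fun z => v z - w z) μ) :
    ∫ z, ‖F z (v z)‖ ∂μ ≤ ∫ z, ‖F z (w z)‖ ∂μ + K * ∫ z, ‖v z - w z‖ ∂μ := by
  have hvw' : Integrable (fun z => ‖v z - w z‖) μ := hvw.norm
  by_cases hFw : Integrable (fun z => ‖F z (w z)‖) μ
  · calc ∫ z, ‖F z (v z)‖ ∂μ ≤ ∫ z, (‖F z (w z)‖ + K * ‖v z - w z‖) ∂μ :=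
          integral_mono (integrable_norm_comp_of_lipschitzWith hF hLip hv hvw hFw)
            (hFw.add (hvw'.const_mul K))
            fun z => (hLip z).norm_le_norm_add_mul_norm_sub (v z) (w z)
      _ = ∫ z, ‖F z (w z)‖ ∂μ + K * ∫ z, ‖v z - w z‖ ∂μ := by
          rw [integral_add hFw (hvw'.const_mul K), integral_const_mul]
  · -- then `‖F z (v z)‖` is not integrable either, and its integral takes the junk value `0`
    have hFv : ¬ Integrable (fun z => ‖F z (v z)‖) μ := fun hFv =>
      hFw (integrable_norm_comp_of_lipschitzWith hF hLip hw
        (by simpa only [Pi.neg_def, neg_sub] using hvw.neg) hFv)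
    rw [integral_undef hFv]
    exact add_nonneg (integral_nonneg fun _ => norm_nonneg _)
      (mul_nonneg K.coe_nonneg (integral_nonneg fun _ => norm_nonneg _))

theorem integral_norm_comp_simpleFunc_le [DecidableEq E] (hF : Measurable (uncurry F))
    (hLip : ∀ z, LipschitzWith K (F z)) (s : SimpleFunc Ω E) (hs : Integrable s μ) :
    ∫ z, ‖F z (s z)‖ ∂μ ≤ ∫ z, ‖F z 0‖ ∂μ +
      ∑ c ∈ s.range.erase 0, ∫ z in s ⁻¹' {c}, ‖F z c‖ ∂μ := by
  by_cases h0 : Integrable (fun z => ‖F z 0‖) μ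
  · have hfibre : ∀ c ∈ s.range.erase 0,
        Integrable ((s ⁻¹' {c}).indicator fun y => ‖F y c‖) μ := fun c hc => by
      have hfin : μ (s ⁻¹' {c}) ≠ ∞ :=
        (s.measure_preimage_lt_top_of_integrable hs (Finset.ne_of_mem_erase hc)).ne
      refine (integrable_indicator_iff (s.measurableSet_fiber c)).2 <|
        integrable_norm_comp_of_lipschitzWith (v := fun _ => c) (w := fun _ => 0) hF hLip
          aemeasurable_const ?_ h0.restrict
      simp_rw [sub_zero]
      exact integrableOn_const hfin
    calc ∫ z, ‖F z (s z)‖ ∂μ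
        ≤ ∫ z, (‖F z 0‖ +
            ∑ c ∈ s.range.erase 0, (s ⁻¹' {c}).indicator (fun y => ‖F y c‖) z) ∂μ :=
          integral_mono
            (integrable_norm_comp_of_lipschitzWith hF hLip s.measurable.aemeasurable
              (by simpa using hs) h0)
            (h0.add (integrable_finsetSum _ hfibre)) (norm_comp_simpleFunc_le F s)
      _ = ∫ z, ‖F z 0‖ ∂μ + ∑ c ∈ s.range.erase 0, ∫ z in s ⁻¹' {c}, ‖F z c‖ ∂μ := by
          rw [integral_add h0 (integrable_finsetSum _ hfibre), integral_finsetSum _ hfibre]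
          simp only [integral_indicator (s.measurableSet_fiber _)]
  · have hFs : ¬ Integrable (fun z => ‖F z (s z)‖) μ := fun hFs =>
      h0 (integrable_norm_comp_of_lipschitzWith hF hLip aemeasurable_const
        (by simpa using hs.neg) hFs)
    rw [integral_undef hFs]
    exact add_nonneg (integral_nonneg fun _ => norm_nonneg _)
      (Finset.sum_nonneg fun _ _ => setIntegral_nonneg (s.measurableSet_fiber _)
        fun _ _ => norm_nonneg _)

end Composition

section Convergence

variable {ι : Type*} {l : Filter ι} {F : ι → Ω → E → G}

theorem tendsto_integral_norm_comp_simpleFunc (hF : ∀ i, Measurable (uncurry (F i)))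
    (hLip : ∀ i z, LipschitzWith K (F i z))
    (hloc : ∀ (c : E) (A : Set Ω), MeasurableSet A → μ A < ∞ →
      Tendsto (fun i => ∫ z in A, ‖F i z c‖ ∂μ) l (𝓝 0))
    (h0 : Tendsto (fun i => ∫ z, ‖F i z 0‖ ∂μ) l (𝓝 0)) (s : SimpleFunc Ω E)
    (hs : Integrable s μ) :
    Tendsto (fun i => ∫ z, ‖F i z (s z)‖ ∂μ) l (𝓝 0) := by
  classical
  have hfibres : Tendsto (fun i => ∑ c ∈ s.range.erase 0, ∫ z in s ⁻¹' {c}, ‖F i z c‖ ∂μ) l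
      (𝓝 0) := by
    simpa using tendsto_finsetSum _ fun c hc => hloc c _ (s.measurableSet_fiber c)
      (s.measure_preimage_lt_top_of_integrable hs (Finset.ne_of_mem_erase hc))
  exact squeeze_zero (fun _ => integral_nonneg fun _ => norm_nonneg _)
    (fun i => integral_norm_comp_simpleFunc_le (hF i) (hLip i) s hs)
    (by simpa using h0.add hfibres)

theorem tendsto_integral_norm_comp [BorelSpace E] (hF : ∀ i, Measurable (uncurry (F i)))
    (hLip : ∀ i z, LipschitzWith K (F i z))
    (hloc : ∀ (c : E) (A : Set Ω), MeasurableSet A → μ A < ∞ →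
      Tendsto (fun i => ∫ z in A, ‖F i z c‖ ∂μ) l (𝓝 0))
    (h0 : Tendsto (fun i => ∫ z, ‖F i z 0‖ ∂μ) l (𝓝 0)) {u : Ω → E} (hu : Integrable u μ) :
    Tendsto (fun i => ∫ z, ‖F i z (u z)‖ ∂μ) l (𝓝 0) := by
  refine tendsto_order.2 ⟨fun a ha => Eventually.of_forall fun i =>
    ha.trans_le (integral_nonneg fun _ => norm_nonneg _), fun ε hε => ?_⟩
  obtain ⟨δ, hδ, hKδ⟩ := exists_pos_mul_lt hε K
  obtain ⟨s, hs, hus⟩ := hu.exists_simpleFunc_integral_norm_sub_lt hδ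
  filter_upwards [(tendsto_integral_norm_comp_simpleFunc hF hLip hloc h0 s hs).eventually
    (gt_mem_nhds (sub_pos.2 hKδ))] with i hi
  calc ∫ z, ‖F i z (u z)‖ ∂μ ≤ ∫ z, ‖F i z (s z)‖ ∂μ + K * ∫ z, ‖u z - s z‖ ∂μ :=
        integral_norm_comp_le_of_lipschitzWith (hF i) (hLip i) hu.aemeasurable
          s.measurable.aemeasurable (hu.sub hs)
    _ ≤ ∫ z, ‖F i z (s z)‖ ∂μ + K * δ := by gcongr
    _ < ε := by linarith

end Convergence

end MeasureTheory

theorem stmt_4_general {Ω : Type*} [MeasurableSpace Ω] (μ : Measure Ω)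
    (L : ℝ) (u : Ω → ℝ) (hu : Integrable u μ)
    (f : Ω → ℝ → ℝ) (fν : ℕ → Ω → ℝ → ℝ)
    (hfmeas : Measurable (Function.uncurry f))
    (hfνmeas : ∀ ν, Measurable (Function.uncurry (fν ν)))
    (hfLip : ∀ z ω₁ ω₂, |f z ω₁ - f z ω₂| ≤ L * |ω₁ - ω₂|)
    (hfνLip : ∀ ν z ω₁ ω₂, |fν ν z ω₁ - fν ν z ω₂| ≤ L * |ω₁ - ω₂|)
    (hloc : ∀ (ω : ℝ) (s : Set Ω), MeasurableSet s → μ s < ⊤ →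
      Tendsto (fun ν => ∫ z in s, |fν ν z ω - f z ω| ∂μ) atTop (nhds 0))
    (h0 : Tendsto (fun ν => ∫ z, |fν ν z 0 - f z 0| ∂μ) atTop (nhds 0)) :
    Tendsto (fun ν => ∫ z, |fν ν z (u z) - f z (u z)| ∂μ) atTop (nhds 0) := by
  have lipschitz {g : ℝ → ℝ} (hg : ∀ a b, |g a - g b| ≤ L * |a - b|) :
      LipschitzWith L.toNNReal g :=
    .of_dist_le' fun a b => by simpa only [Real.dist_eq] using hg a b
  simpa only [Real.norm_eq_abs] using tendsto_integral_norm_comp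
    (F := fun ν z a => fν ν z a - f z a) (fun ν => (hfνmeas ν).sub hfmeas)
    (fun ν z => (lipschitz (hfνLip ν z)).sub (lipschitz (hfLip z)))
    (by simpa only [Real.norm_eq_abs] using hloc) (by simpa only [Real.norm_eq_abs] using h0) hu

theorem stmt_4 {Ω : Type*} [MeasurableSpace Ω] (μ : Measure Ω) [SigmaFinite μ]
    (L : ℝ) (u : Ω → ℝ) (hu : Integrable u μ)
    (f : Ω → ℝ → ℝ) (fν : ℕ → Ω → ℝ → ℝ)
    (hfmeas : Measurable (Function.uncurry f))
    (hfνmeas : ∀ ν, Measurable (Function.uncurry (fν ν)))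
    (hfLip : ∀ z ω₁ ω₂, |f z ω₁ - f z ω₂| ≤ L * |ω₁ - ω₂|)
    (hfνLip : ∀ ν z ω₁ ω₂, |fν ν z ω₁ - fν ν z ω₂| ≤ L * |ω₁ - ω₂|)
    (hloc : ∀ (ω : ℝ) (s : Set Ω), MeasurableSet s → μ s < ⊤ →
      Tendsto (fun ν => ∫ z in s, |fν ν z ω - f z ω| ∂μ) atTop (nhds 0))
    (h0 : Tendsto (fun ν => ∫ z, |fν ν z 0 - f z 0| ∂μ) atTop (nhds 0)) :
    Tendsto (fun ν => ∫ z, |fν ν z (u z) - f z (u z)| ∂μ) atTop (nhds 0) :=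
  stmt_4_general μ L u hu f fν hfmeas hfνmeas hfLip hfνLip hloc h0
end

section
/- Let u_n, u ∈ L¹(ℝ) with 0 ≤ u_n ≤ 1 and define U_n(x) = ∫_{−∞}^x u_n(y) dy, U(x) = ∫_{−∞}^x u(y) dy. Assume the family {u_n} is tight: for every δ > 0 there is M with ∫_{|x|>M} u_n(x) dx < δ for all n. Then u_n ⇀ u weakly in L¹(ℝ) if and only if U_n → U uniformly on ℝ. -/
open MeasureTheory Filter Set Topology
open scoped Interval NNReal

/-!
Both directions rest on two properties that hold uniformly in `n`: the primitive
`U n x = ∫ y in Iic x, u n y` is 1-Lipschitz because `0 ≤ u n ≤ 1`, and by tightness its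
variation outside a large interval `[-R, R]` is small.

(⇒) Testing against indicators of half-lines gives `U n → U` pointwise. By Ascoli,
equi-Lipschitz functions converging pointwise converge uniformly on compacts, and the uniformly
small variation outside `[-R, R]` takes care of the rest of the line.

(⇐) Uniform convergence gives `∫ u n φ → ∫ u φ` for indicators of half-lines. Because `u n ≤ 1`
and the family is tight, the class of bounded test functions with this property is closed under
bounded pointwise limits: `|∫ u n (ψ - φ_k)|` is at most `∫_{[-R,R]} |ψ - φ_k|` plus a tail
that is small uniformly in `n`.
Dynkin's π-λ theorem carries the convergence from half-lines to all Borel sets, linearity to simple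
functions, and bounded approximation to all bounded measurable `φ`.
-/

section Primitive

variable {f : ℝ → ℝ}

lemma integral_Iic_sub_integral_Iic (hf : Integrable f) (a b : ℝ) :
    (∫ y in Iic b, f y) - ∫ y in Iic a, f y = ∫ y in a..b, f y :=
  intervalIntegral.integral_Iic_sub_Iic hf.integrableOn hf.integrableOn

lemma lipschitzWith_integral_Iic {K : ℝ≥0} (hf : Integrable f) (hK : ∀ x, |f x| ≤ K) :
    LipschitzWith K (fun x => ∫ y in Iic x, f y) := by
  refine LipschitzWith.of_dist_le_mul fun x y => ?_
  rw [Real.dist_eq, integral_Iic_sub_integral_Iic hf, Real.dist_eq, ← Real.norm_eq_abs]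
  exact intervalIntegral.norm_integral_le_of_norm_le_const fun z _ =>
    (Real.norm_eq_abs (f z)).trans_le (hK z)

lemma abs_integral_Iic_sub_le (hf : Integrable f) {a b : ℝ} {s : Set ℝ} (hab : Ι a b ⊆ s) :
    |(∫ y in Iic b, f y) - ∫ y in Iic a, f y| ≤ ∫ y in s, |f y| := by
  rw [integral_Iic_sub_integral_Iic hf]
  exact intervalIntegral.norm_integral_le_integral_norm_uIoc.trans
    (setIntegral_mono_set hf.abs.integrableOn (ae_of_all _ fun y => norm_nonneg (f y))
      hab.eventuallyLE)

end Primitive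

lemma uIoc_clamp_subset {M R : ℝ} (hM : 0 ≤ M) (hMR : M < R) (x : ℝ) :
    Ι (max (-R) (min R x)) x ⊆ {y | M < |y|} := by
  intro y hy
  rcases le_total x (-R) with hx | hx
  · rw [min_eq_right (by linarith), max_eq_left hx, uIoc_of_ge hx] at hy
    exact (show M < -y by linarith [hy.2]).trans_le (neg_le_abs y)
  rcases le_total x R with hx' | hx'
  · simp [min_eq_right hx', max_eq_right hx] at hy
  · rw [min_eq_left hx', max_eq_right (by linarith), uIoc_of_le hx'] at hy
    exact (show M < y by linarith [hy.1]).trans_le (le_abs_self y)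

theorem tendstoUniformlyOn_of_lipschitzWith {ι X Y : Type*} [PseudoMetricSpace X]
    [PseudoMetricSpace Y] {p : Filter ι} {F : ι → X → Y} {f : X → Y} {L : ℝ≥0}
    (hF : ∀ i, LipschitzWith L (F i)) (hpt : ∀ x, Tendsto (F · x) p (𝓝 (f x)))
    {s : Set X} (hs : IsCompact s) : TendstoUniformlyOn F f p s := by
  have hcover : ⋃₀ {K : Set X | IsCompact K} = univ :=
    eq_univ_of_forall fun x => mem_sUnion.mpr ⟨{x}, isCompact_singleton, rfl⟩
  have h := (EquicontinuousOn.tendsto_uniformOnFun_iff_pi (fun K hK => hK) hcover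
    (fun K _ => (LipschitzWith.uniformEquicontinuous F L hF).equicontinuous.equicontinuousOn K)
    p f).mpr (tendsto_pi_nhds.mpr hpt)
  exact UniformOnFun.tendsto_iff_tendstoUniformlyOn.mp h s hs

theorem tendstoUniformly_of_tendstoUniformlyOn_Icc {ι : Type*} {p : Filter ι} [NeBot p]
    {F : ι → ℝ → ℝ} {f : ℝ → ℝ} (hK : ∀ R, TendstoUniformlyOn F f p (Icc (-R) R))
    (htail : ∀ ε > 0, ∃ R ≥ 0, ∀ i x, |F i x - F i (max (-R) (min R x))| ≤ ε) :
    TendstoUniformly F f p := by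
  have hpt : ∀ x, Tendsto (F · x) p (𝓝 (f x)) := fun x =>
    (hK |x|).tendsto_at ⟨neg_abs_le x, le_abs_self x⟩
  rw [Metric.tendstoUniformly_iff]
  intro ε hε
  obtain ⟨R, hR0, hR⟩ := htail (ε / 4) (by positivity)
  set c : ℝ → ℝ := fun x => max (-R) (min R x)
  have hc : ∀ x, c x ∈ Icc (-R) R := fun x =>
    ⟨le_max_left _ _, max_le (by linarith) (min_le_left _ _)⟩
  have hftail : ∀ x, |f x - f (c x)| ≤ ε / 4 := fun x =>
    le_of_tendsto ((hpt x).sub (hpt _)).abs (Eventually.of_forall fun i => hR i x)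
  filter_upwards [Metric.tendstoUniformlyOn_iff.mp (hK R) (ε / 4) (by positivity)] with i hi x
  have hmid := hi _ (hc x)
  rw [Real.dist_eq] at hmid ⊢
  linarith [abs_sub_le (f x) (f (c x)) (F i x), abs_sub_le (f (c x)) (F i (c x)) (F i x),
    abs_sub_comm (F i (c x)) (F i x), hftail x, hR i x]

lemma abs_integral_mul_le_setIntegral_abs_add {α : Type*} [MeasurableSpace α] {μ : Measure α}
    {f g : α → ℝ} {C : ℝ} (hf : Integrable f μ) (hf0 : ∀ x, 0 ≤ f x) (hf1 : ∀ x, f x ≤ 1)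
    (hg : AEStronglyMeasurable g μ) (hgC : ∀ x, |g x| ≤ C) {s : Set α} (hs : MeasurableSet s)
    (hgs : IntegrableOn g s μ) :
    |∫ x, f x * g x ∂μ| ≤ ∫ x in s, |g x| ∂μ + C * ∫ x in sᶜ, f x ∂μ := by
  have hfg : Integrable (fun x => f x * |g x|) μ :=
    hf.mul_bdd hg.norm (ae_of_all _ fun x => by simpa using hgC x)
  calc |∫ x, f x * g x ∂μ| ≤ ∫ x, f x * |g x| ∂μ := by
        simpa [abs_mul, abs_of_nonneg (hf0 _)] using
          norm_integral_le_integral_norm (μ := μ) (fun x => f x * g x)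
    _ = ∫ x in s, f x * |g x| ∂μ + ∫ x in sᶜ, f x * |g x| ∂μ :=
        (integral_add_compl hs hfg).symm
    _ ≤ ∫ x in s, |g x| ∂μ + ∫ x in sᶜ, C * f x ∂μ := by
        refine add_le_add (setIntegral_mono_on hfg.integrableOn hgs.abs hs fun x _ =>
          mul_le_of_le_one_left (abs_nonneg _) (hf1 x)) (setIntegral_mono_on hfg.integrableOn
            (hf.const_mul C).integrableOn hs.compl fun x _ => ?_)
        rw [mul_comm]
        exact mul_le_mul_of_nonneg_right (hgC x) (hf0 x)
    _ = ∫ x in s, |g x| ∂μ + C * ∫ x in sᶜ, f x ∂μ := by rw [integral_const_mul]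

lemma eventually_mem_biUnion_range_iff {α : Type*} (f : ℕ → Set α) (x : α) :
    ∀ᶠ k in atTop, x ∈ ⋃ i ∈ Finset.range k, f i ↔ x ∈ ⋃ i, f i := by
  by_cases hx : x ∈ ⋃ i, f i
  · obtain ⟨i, hi⟩ := mem_iUnion.mp hx
    filter_upwards [eventually_gt_atTop i] with k hk
    exact iff_of_true (mem_biUnion (Finset.mem_range.mpr hk) hi) hx
  · refine Eventually.of_forall fun k => iff_of_false (fun h => hx ?_) hx
    obtain ⟨i, -, hi⟩ := mem_iUnion₂.mp h
    exact mem_iUnion_of_mem i hi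

lemma compl_Icc_neg_self (M : ℝ) : (Icc (-M) M)ᶜ = {x | M < |x|} := by
  ext x
  simp only [mem_compl_iff, mem_Icc, ← abs_le, not_le, mem_ofPred_eq]

section WeakConvergence

variable {u : ℕ → ℝ → ℝ} {v : ℝ → ℝ}

def IsTight (u : ℕ → ℝ → ℝ) : Prop :=
  ∀ δ > (0 : ℝ), ∃ M > (0 : ℝ), ∀ n, (∫ x in {x : ℝ | M < |x|}, u n x) < δ

def ConvergesAgainst (u : ℕ → ℝ → ℝ) (v : ℝ → ℝ) (φ : ℝ → ℝ) : Prop :=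
  Tendsto (fun n => ∫ x, u n x * φ x) atTop (𝓝 (∫ x, v x * φ x))

lemma integral_mul_indicator_one (f : ℝ → ℝ) {s : Set ℝ} (hs : MeasurableSet s) :
    ∫ x, f x * s.indicator 1 x = ∫ x in s, f x := by
  simp_rw [← indicator_mul_right, Pi.one_apply, mul_one, integral_indicator hs]

lemma convergesAgainst_indicator_iff {s : Set ℝ} (hs : MeasurableSet s) :
    ConvergesAgainst u v (s.indicator 1) ↔
      Tendsto (fun n => ∫ x in s, u n x) atTop (𝓝 (∫ x in s, v x)) := by
  simp only [ConvergesAgainst, integral_mul_indicator_one _ hs]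

lemma ConvergesAgainst.const_mul {φ : ℝ → ℝ} (h : ConvergesAgainst u v φ) (c : ℝ) :
    ConvergesAgainst u v (fun x => c * φ x) := by
  simp only [ConvergesAgainst, mul_left_comm _ c, integral_const_mul]
  exact Tendsto.const_mul c h

lemma ConvergesAgainst.add {φ ψ : ℝ → ℝ} {C D : ℝ} (hu : ∀ n, Integrable (u n))
    (hv : Integrable v) (hφ : Measurable φ) (hφC : ∀ x, |φ x| ≤ C) (hψ : Measurable ψ)
    (hψD : ∀ x, |ψ x| ≤ D) (h : ConvergesAgainst u v φ) (h' : ConvergesAgainst u v ψ) :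
    ConvergesAgainst u v (φ + ψ) := by
  have hint : ∀ {f χ : ℝ → ℝ} {B : ℝ}, Integrable f → Measurable χ → (∀ x, |χ x| ≤ B) →
      Integrable (fun x => f x * χ x) := fun hf hχ hB =>
    hf.mul_bdd hχ.aestronglyMeasurable (ae_of_all _ hB)
  simp only [ConvergesAgainst, Pi.add_apply, mul_add]
  simp only [integral_add (hint (hu _) hφ hφC) (hint (hu _) hψ hψD),
    integral_add (hint hv hφ hφC) (hint hv hψ hψD)]
  exact Tendsto.add h h'

theorem tendstoUniformly_integral_mul_of_tendsto (hu : ∀ n, Integrable (u n))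
    (hu0 : ∀ n x, 0 ≤ u n x) (hu1 : ∀ n x, u n x ≤ 1) (htight : IsTight u)
    {φ : ℕ → ℝ → ℝ} {ψ : ℝ → ℝ} {C : ℝ} (hφ : ∀ k, Measurable (φ k)) (hψ : Measurable ψ)
    (hφC : ∀ k x, |φ k x| ≤ C) (hψC : ∀ x, |ψ x| ≤ C)
    (hlim : ∀ x, Tendsto (fun k => φ k x) atTop (𝓝 (ψ x))) :
    TendstoUniformly (fun k n => ∫ x, u n x * φ k x) (fun n => ∫ x, u n x * ψ x) atTop := by
  have hC : 0 ≤ C := (abs_nonneg _).trans (hψC 0)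
  have hdiff : ∀ k x, |ψ x - φ k x| ≤ 2 * C := fun k x => by
    linarith [abs_sub (ψ x) (φ k x), hψC x, hφC k x]
  have hlocal : ∀ M, Tendsto (fun k => ∫ x in Icc (-M) M, |ψ x - φ k x|) atTop (𝓝 0) := by
    intro M
    simpa using tendsto_integral_of_dominated_convergence (μ := volume.restrict (Icc (-M) M))
      (fun _ => 2 * C) (fun k => (hψ.sub (hφ k)).abs.aestronglyMeasurable)
      (integrableOn_const measure_Icc_lt_top.ne)
      (fun k => ae_of_all _ fun x => by simpa using hdiff k x)
      (ae_of_all _ fun x => ((tendsto_const_nhds (x := ψ x)).sub (hlim x)).abs)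
  rw [Metric.tendstoUniformly_iff]
  intro ε hε
  obtain ⟨M, -, hM⟩ := htight (ε / (2 * (2 * C + 1))) (by positivity)
  filter_upwards [(hlocal M).eventually (gt_mem_nhds (half_pos hε))] with k hk n
  have hest := abs_integral_mul_le_setIntegral_abs_add (g := fun x => ψ x - φ k x) (hu n)
    (hu0 n) (hu1 n) (hψ.sub (hφ k)).aestronglyMeasurable (hdiff k)
    (measurableSet_Icc (a := -M) (b := M))
    (Integrable.mono' (integrableOn_const (C := 2 * C) measure_Icc_lt_top.ne)
      (hψ.sub (hφ k)).aestronglyMeasurable.restrict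
      (ae_of_all _ fun x => by simpa using hdiff k x))
  rw [compl_Icc_neg_self] at hest
  have htail : 2 * C * ∫ x in {x | M < |x|}, u n x ≤ ε / 2 :=
    calc 2 * C * ∫ x in {x | M < |x|}, u n x ≤ 2 * C * (ε / (2 * (2 * C + 1))) :=
          mul_le_mul_of_nonneg_left (hM n).le (by positivity)
      _ ≤ ε / 2 := by
          rw [mul_div_assoc', div_le_div_iff₀ (by positivity) two_pos]
          nlinarith
  rw [Real.dist_eq, ← integral_sub
    ((hu n).mul_bdd hψ.aestronglyMeasurable (ae_of_all _ hψC))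
    ((hu n).mul_bdd (hφ k).aestronglyMeasurable (ae_of_all _ (hφC k)))]
  simp only [← mul_sub]
  linarith

theorem ConvergesAgainst.of_tendsto (hu : ∀ n, Integrable (u n)) (hu0 : ∀ n x, 0 ≤ u n x)
    (hu1 : ∀ n x, u n x ≤ 1) (htight : IsTight u) (hv : Integrable v)
    {φ : ℕ → ℝ → ℝ} {ψ : ℝ → ℝ} {C : ℝ} (hφ : ∀ k, Measurable (φ k))
    (hφC : ∀ k x, |φ k x| ≤ C) (hlim : ∀ x, Tendsto (fun k => φ k x) atTop (𝓝 (ψ x)))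
    (h : ∀ k, ConvergesAgainst u v (φ k)) : ConvergesAgainst u v ψ := by
  have hψ : Measurable ψ := measurable_of_tendsto_metrizable hφ (tendsto_pi_nhds.mpr hlim)
  have hψC : ∀ x, |ψ x| ≤ C := fun x =>
    le_of_tendsto (hlim x).abs (Eventually.of_forall fun k => hφC k x)
  have hv_lim : Tendsto (fun k => ∫ x, v x * φ k x) atTop (𝓝 (∫ x, v x * ψ x)) :=
    tendsto_integral_of_dominated_convergence (fun x => |v x| * C)
      (fun k => hv.aestronglyMeasurable.mul (hφ k).aestronglyMeasurable) (hv.abs.mul_const C)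
      (fun k => ae_of_all _ fun x => by
        rw [norm_mul, Real.norm_eq_abs, Real.norm_eq_abs]
        exact mul_le_mul_of_nonneg_left (hφC k x) (abs_nonneg _))
      (ae_of_all _ fun x => (hlim x).const_mul (v x))
  exact (tendstoUniformly_integral_mul_of_tendsto hu hu0 hu1 htight hφ hψ hφC hψC hlim
    ).tendsto_of_eventually_tendsto (Eventually.of_forall h) hv_lim

theorem tendsto_setIntegral_of_forall_eventually_mem_iff (hu : ∀ n, Integrable (u n))
    (hu0 : ∀ n x, 0 ≤ u n x) (hu1 : ∀ n x, u n x ≤ 1) (htight : IsTight u)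
    (hv : Integrable v) {t : ℕ → Set ℝ} {s : Set ℝ} (ht : ∀ k, MeasurableSet (t k))
    (hs : MeasurableSet s) (hts : ∀ x, ∀ᶠ k in atTop, x ∈ t k ↔ x ∈ s)
    (h : ∀ k, Tendsto (fun n => ∫ x in t k, u n x) atTop (𝓝 (∫ x in t k, v x))) :
    Tendsto (fun n => ∫ x in s, u n x) atTop (𝓝 (∫ x in s, v x)) := by
  rw [← convergesAgainst_indicator_iff hs]
  refine ConvergesAgainst.of_tendsto hu hu0 hu1 htight hv (φ := fun k => (t k).indicator 1)
    (C := 1) (fun k => measurable_one.indicator (ht k)) (fun k x => ?_)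
    (fun x => (tendsto_indicator_const_apply_iff_eventually _ 1 x).mpr (hts x))
    (fun k => (convergesAgainst_indicator_iff (ht k)).mpr (h k))
  by_cases hx : x ∈ t k <;> simp [hx]

theorem tendsto_setIntegral_of_tendsto_integral_Iic (hu : ∀ n, Integrable (u n))
    (hu0 : ∀ n x, 0 ≤ u n x) (hu1 : ∀ n x, u n x ≤ 1) (htight : IsTight u) (hv : Integrable v)
    (hpt : ∀ x, Tendsto (fun n => ∫ y in Iic x, u n y) atTop (𝓝 (∫ y in Iic x, v y)))
    {s : Set ℝ} (hs : MeasurableSet s) :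
    Tendsto (fun n => ∫ x in s, u n x) atTop (𝓝 (∫ x in s, v x)) := by
  have htot : Tendsto (fun n => ∫ x, u n x) atTop (𝓝 (∫ x, v x)) := by
    simpa using tendsto_setIntegral_of_forall_eventually_mem_iff hu hu0 hu1 htight hv
      (fun k : ℕ => measurableSet_Iic) MeasurableSet.univ
      (fun x => (tendsto_natCast_atTop_atTop.eventually_ge_atTop x).mono fun k hk => by simpa)
      (fun k => hpt k)
  induction s, hs using MeasurableSpace.induction_on_inter (borel_eq_generateFrom_Iic ℝ)
    isPiSystem_Iic with
  | empty => simp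
  | basic t ht =>
    obtain ⟨x, rfl⟩ := ht
    exact hpt x
  | compl t ht ih =>
    simp_rw [setIntegral_compl ht (hu _), setIntegral_compl ht hv]
    exact htot.sub ih
  | iUnion f hdisj hf ih =>
    refine tendsto_setIntegral_of_forall_eventually_mem_iff hu hu0 hu1 htight hv
      (t := fun k => ⋃ i ∈ Finset.range k, f i)
      (fun k => Finset.measurableSet_biUnion _ fun i _ => hf i) (MeasurableSet.iUnion hf)
      (fun x => ?_) (fun k => ?_)
    · exact eventually_mem_biUnion_range_iff f x
    · simp_rw [integral_biUnion_finset _ (fun i _ => hf i) (hdisj.set_pairwise _)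
        (fun i _ => (hu _).integrableOn), integral_biUnion_finset _ (fun i _ => hf i)
        (hdisj.set_pairwise _) (fun i _ => hv.integrableOn)]
      exact tendsto_finsetSum _ fun i _ => ih i

theorem ConvergesAgainst.of_simpleFunc (hu : ∀ n, Integrable (u n)) (hv : Integrable v)
    (hsets : ∀ s, MeasurableSet s →
      Tendsto (fun n => ∫ x in s, u n x) atTop (𝓝 (∫ x in s, v x)))
    (f : SimpleFunc ℝ ℝ) : ConvergesAgainst u v f := by
  induction f using SimpleFunc.induction with
  | @const c s hs =>
    have hcoe : ⇑(SimpleFunc.piecewise s hs (SimpleFunc.const ℝ c) (SimpleFunc.const ℝ 0)) =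
        fun x => c * s.indicator 1 x := by
      ext x
      by_cases hx : x ∈ s <;> simp [hx]
    rw [hcoe]
    exact ((convergesAgainst_indicator_iff hs).mpr (hsets s hs)).const_mul c
  | @add f g _ hf hg =>
    obtain ⟨C, hC⟩ := f.exists_forall_norm_le
    obtain ⟨D, hD⟩ := g.exists_forall_norm_le
    rw [SimpleFunc.coe_add]
    exact hf.add hu hv f.measurable hC g.measurable hD hg

theorem ConvergesAgainst.of_measurable_of_bounded (hu : ∀ n, Integrable (u n))
    (hu0 : ∀ n x, 0 ≤ u n x) (hu1 : ∀ n x, u n x ≤ 1) (htight : IsTight u) (hv : Integrable v)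
    (hpt : ∀ x, Tendsto (fun n => ∫ y in Iic x, u n y) atTop (𝓝 (∫ y in Iic x, v y)))
    {φ : ℝ → ℝ} {C : ℝ} (hφ : Measurable φ) (hC : ∀ x, |φ x| ≤ C) :
    ConvergesAgainst u v φ := by
  have hφs := hφ.stronglyMeasurable
  exact ConvergesAgainst.of_tendsto hu hu0 hu1 htight hv (C := C)
    (fun k => (hφs.approxBounded C k).measurable)
    (fun k x => hφs.norm_approxBounded_le ((abs_nonneg _).trans (hC 0)) k x)
    (fun x => hφs.tendsto_approxBounded_of_norm_le (hC x))
    (fun k => .of_simpleFunc hu hv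
      (fun s hs => tendsto_setIntegral_of_tendsto_integral_Iic hu hu0 hu1 htight hv hpt hs) _)

theorem tendstoUniformly_integral_Iic (hu : ∀ n, Integrable (u n))
    (hu0 : ∀ n x, 0 ≤ u n x) (hu1 : ∀ n x, u n x ≤ 1) (htight : IsTight u)
    (hpt : ∀ x, Tendsto (fun n => ∫ y in Iic x, u n y) atTop (𝓝 (∫ y in Iic x, v y))) :
    TendstoUniformly (fun n x => ∫ y in Iic x, u n y) (fun x => ∫ y in Iic x, v y) atTop := by
  refine tendstoUniformly_of_tendstoUniformlyOn_Icc (fun R => ?_) fun ε hε => ?_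
  · refine tendstoUniformlyOn_of_lipschitzWith (L := 1) (fun n => ?_) hpt isCompact_Icc
    exact lipschitzWith_integral_Iic (hu n) fun x => by
      simpa [abs_of_nonneg (hu0 n x)] using hu1 n x
  · obtain ⟨M, hM, hMt⟩ := htight ε hε
    refine ⟨M + 1, by linarith, fun n x => ?_⟩
    calc _ ≤ ∫ y in {y | M < |y|}, |u n y| :=
          abs_integral_Iic_sub_le (hu n) (uIoc_clamp_subset hM.le (lt_add_one M) x)
      _ = ∫ y in {y | M < |y|}, u n y := by simp_rw [abs_of_nonneg (hu0 n _)]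
      _ ≤ ε := (hMt n).le

end WeakConvergence

theorem stmt_10 (u : ℕ → ℝ → ℝ) (ulim : ℝ → ℝ)
    (hint : ∀ n, Integrable (u n)) (hlimint : Integrable ulim)
    (h0 : ∀ n x, 0 ≤ u n x) (h1 : ∀ n x, u n x ≤ 1)
    (htight : ∀ δ > (0 : ℝ), ∃ M > (0 : ℝ), ∀ n,
      (∫ x in {x : ℝ | M < |x|}, u n x) < δ) :
    (∀ φ : ℝ → ℝ, Measurable φ → (∃ C : ℝ, ∀ x, |φ x| ≤ C) →
        Tendsto (fun n => ∫ x, u n x * φ x) atTop (nhds (∫ x, ulim x * φ x))) ↔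
    TendstoUniformly (fun n x => ∫ y in Set.Iic x, u n y)
      (fun x => ∫ y in Set.Iic x, ulim y) atTop := by
  constructor
  · intro h
    refine tendstoUniformly_integral_Iic hint h0 h1 htight fun x => ?_
    refine (convergesAgainst_indicator_iff measurableSet_Iic).mp
      (h _ (measurable_one.indicator measurableSet_Iic) ⟨1, fun y => ?_⟩)
    by_cases hy : y ∈ Iic x <;> simp [hy]
  · rintro h φ hφ ⟨C, hC⟩
    exact ConvergesAgainst.of_measurable_of_bounded hint h0 h1 htight hlimint h.tendsto_at hφ hC
end

section
/- Let U_n : [a,b] × ℝ → ℝ be continuous functions converging uniformly on [a,b] × ℝ to U, where each U_n(t,·) is nondecreasing, 1-Lipschitz, with U_n(t,−∞)=0 and sup U_n(t,·) ≤ C. Then U is continuous, and for each t the function u(t,·) := ∂_x U(t,·) exists a.e.; moreover the map t ↦ u(t,·) is continuous from [a,b] into L¹(ℝ) endowed with its weak topology, provided the family is tight uniformly in t. -/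
/-!
Uniform limits keep monotonicity, the Lipschitz bound, the bound `C` and the limit `0` at `-∞`,
so every `U t` is the distribution function of a finite measure whose density `deriv (U t)` takes
values in `[0, 1]` (fundamental theorem of calculus for absolutely continuous functions).
Hence `t ↦ ∫ deriv (U t) * 1_(p, q] = U t q - U t p` is continuous, and by linearity so is
`t ↦ ∫ deriv (U t) * h` for every step function `h`. Step functions are dense in `L¹` and the
densities are bounded, which gives continuity for integrable test functions; uniform tightness
then lets one replace a bounded `φ` by its restriction to a fixed interval `(-M, M]`.
-/

open MeasureTheory Filter Set NNReal Topology

def stepFunctions : Submodule ℝ (ℝ → ℝ) :=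
  Submodule.span ℝ (range fun pq : ℝ × ℝ => (Ioc pq.1 pq.2).indicator 1)

theorem integrable_of_mem_stepFunctions {h : ℝ → ℝ} (hh : h ∈ stepFunctions) :
    Integrable h := by
  induction hh using Submodule.span_induction with
  | mem _ hmem =>
    obtain ⟨⟨p, q⟩, rfl⟩ := hmem
    exact (integrable_indicator_iff measurableSet_Ioc).2
      (integrableOn_const measure_Ioc_lt_top.ne)
  | zero => exact integrable_zero _ _ _
  | add _ _ _ _ h₁ h₂ => exact h₁.add h₂
  | smul c _ _ h => exact h.smul c

theorem sum_smul_indicator_Ioc_apply {δ : ℝ} (hδ : 0 < δ) (S : Finset ℤ) (c : ℤ → ℝ) (x : ℝ) :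
    (∑ k ∈ S, c k • (Ioc ((k - 1) * δ) (k * δ)).indicator (1 : ℝ → ℝ)) x =
      if ⌈x / δ⌉ ∈ S then c ⌈x / δ⌉ else 0 := by
  have hmem : ∀ k : ℤ, x ∈ Ioc ((k - 1) * δ) (k * δ) ↔ ⌈x / δ⌉ = k := by
    intro k
    rw [Int.ceil_eq_iff, mem_Ioc, lt_div_iff₀ hδ, div_le_iff₀ hδ]
  simp only [Finset.sum_apply, Pi.smul_apply, indicator_apply, hmem, Pi.one_apply, smul_eq_mul,
    mul_ite, mul_one, mul_zero]
  rw [Finset.sum_ite_eq]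

theorem exists_mem_stepFunctions_forall_eq_ceil {g : ℝ → ℝ} {R δ : ℝ} (hδ : 0 < δ)
    (hg : ∀ x, R < |x| → g x = 0) :
    ∃ h ∈ stepFunctions, ∀ x, h x = g (⌈x / δ⌉ * δ) := by
  set N : ℕ := ⌈R / δ⌉₊
  refine ⟨∑ k ∈ Finset.Icc (-N : ℤ) N, g (k * δ) • (Ioc ((k - 1) * δ) (k * δ)).indicator 1,
    Submodule.sum_mem _ fun k _ => Submodule.smul_mem _ _ (Submodule.subset_span ⟨(_, _), rfl⟩),
    fun x => ?_⟩
  rw [sum_smul_indicator_Ioc_apply hδ, ite_eq_left_iff]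
  intro hk
  refine (hg _ ?_).symm
  rw [Finset.mem_Icc, ← abs_le, not_le] at hk
  calc R ≤ N * δ := (div_le_iff₀ hδ).1 (Nat.le_ceil _)
    _ < |(⌈x / δ⌉ : ℝ)| * δ := by gcongr; exact_mod_cast hk
    _ = |⌈x / δ⌉ * δ| := by rw [abs_mul, abs_of_pos hδ]

theorem HasCompactSupport.exists_mem_stepFunctions_integral_norm_sub_le {g : ℝ → ℝ}
    (hgc : HasCompactSupport g) (hg : Continuous g) {ε : ℝ} (hε : 0 < ε) :
    ∃ h ∈ stepFunctions, ∫ x, ‖g x - h x‖ ≤ ε := by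
  obtain ⟨R, hR⟩ := hgc.isBounded.subset_closedBall 0
  have hR0 : ∀ x, R < |x| → g x = 0 := fun x hx => image_eq_zero_of_notMem_tsupport
    fun hx' => (hx.trans_le (by simpa using hR hx')).false
  set η := ε / (2 * (|R| + 1))
  obtain ⟨δ₀, hδ₀, hg_unif⟩ :=
    Metric.uniformContinuous_iff.1 (hgc.uniformContinuous_of_continuous hg) η (by positivity)
  set δ := min δ₀ 1
  have hδ : 0 < δ := lt_min hδ₀ one_pos
  obtain ⟨h, hh, hh_eq⟩ := exists_mem_stepFunctions_forall_eq_ceil hδ hR0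
  refine ⟨h, hh, ?_⟩
  have hround : ∀ x, x ≤ ⌈x / δ⌉ * δ ∧ ⌈x / δ⌉ * δ < x + δ := fun x =>
    ⟨(div_le_iff₀ hδ).1 (Int.le_ceil _),
      by nlinarith [Int.ceil_lt_add_one (x / δ), div_mul_cancel₀ x hδ.ne']⟩
  have hclose : ∀ x, ‖g x - h x‖ ≤ η := by
    intro x
    rw [hh_eq, ← dist_eq_norm]
    refine (hg_unif ?_).le
    rw [Real.dist_eq, abs_sub_lt_iff]
    constructor <;> linarith [hround x, min_le_left δ₀ 1]
  have hvanish : ∀ x ∉ Icc (-(|R| + 1)) (|R| + 1), ‖g x - h x‖ = 0 := by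
    intro x hx
    have hδ1 : δ ≤ 1 := min_le_right δ₀ 1
    rw [mem_Icc, not_and_or, not_le, not_le] at hx
    rw [hh_eq, hR0 x, hR0 (⌈x / δ⌉ * δ), sub_zero, norm_zero]
    all_goals
      rcases hx with hx | hx
      · rw [lt_abs]; right; linarith [hround x, le_abs_self R]
      · rw [lt_abs]; left; linarith [hround x, le_abs_self R]
  calc ∫ x, ‖g x - h x‖ = ∫ x in Icc (-(|R| + 1)) (|R| + 1), ‖g x - h x‖ :=
        (setIntegral_eq_integral_of_forall_compl_eq_zero hvanish).symm
    _ ≤ η * volume.real (Icc (-(|R| + 1)) (|R| + 1)) :=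
        (Real.le_norm_self _).trans (norm_setIntegral_le_of_norm_le_const measure_Icc_lt_top
          fun x _ => by rw [norm_norm]; exact hclose x)
    _ = ε := by
        rw [Real.volume_real_Icc_of_le (by linarith [abs_nonneg R])]
        simp only [η]
        field_simp
        ring

theorem MeasureTheory.Integrable.exists_mem_stepFunctions_integral_norm_sub_le {ψ : ℝ → ℝ}
    (hψ : Integrable ψ) {ε : ℝ} (hε : 0 < ε) :
    ∃ h ∈ stepFunctions, ∫ x, ‖ψ x - h x‖ ≤ ε := by
  obtain ⟨g, hgc, hψg, hg, hgi⟩ := hψ.exists_hasCompactSupport_integral_sub_le (half_pos hε)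
  obtain ⟨h, hh, hgh⟩ := hgc.exists_mem_stepFunctions_integral_norm_sub_le hg (half_pos hε)
  have hhi := integrable_of_mem_stepFunctions hh
  have hψg_int : Integrable fun x => ‖ψ x - g x‖ := (hψ.sub hgi).norm
  have hgh_int : Integrable fun x => ‖g x - h x‖ := (hgi.sub hhi).norm
  refine ⟨h, hh, ?_⟩
  calc ∫ x, ‖ψ x - h x‖ ≤ ∫ x, (‖ψ x - g x‖ + ‖g x - h x‖) :=
        integral_mono (hψ.sub hhi).norm (hψg_int.add hgh_int)
          fun x => norm_sub_le_norm_sub_add_norm_sub _ _ _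
    _ = (∫ x, ‖ψ x - g x‖) + ∫ x, ‖g x - h x‖ := integral_add hψg_int hgh_int
    _ ≤ ε := by linarith

theorem Metric.continuousOn_of_forall_dist_le {X Y : Type*} [TopologicalSpace X]
    [PseudoMetricSpace Y] {F : X → Y} {s : Set X}
    (h : ∀ ε > 0, ∃ G : X → Y, ContinuousOn G s ∧ ∀ t ∈ s, dist (F t) (G t) ≤ ε) :
    ContinuousOn F s := by
  refine continuousOn_of_uniform_approx_of_continuousOn fun V hV => ?_
  obtain ⟨ε, hε, hεV⟩ := Metric.mem_uniformity_dist.1 hV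
  obtain ⟨G, hG, hFG⟩ := h (ε / 2) (half_pos hε)
  exact ⟨G, hG, fun t ht => hεV ((hFG t ht).trans_lt (half_lt_self hε))⟩

theorem mul_div_add_one_le {c ε : ℝ} (hc : 0 ≤ c) (hε : 0 ≤ ε) : c * (ε / (c + 1)) ≤ ε := by
  rw [mul_div_assoc']
  exact div_le_of_le_mul₀ (by positivity) hε (by nlinarith)

section WeakContinuity

variable {X : Type*} [TopologicalSpace X] {s : Set X} {u : X → ℝ → ℝ} {K : ℝ≥0}

theorem continuousOn_integral_mul_of_mem_stepFunctions
    (hu : ∀ t ∈ s, AEStronglyMeasurable (u t)) (hK : ∀ t ∈ s, ∀ x, ‖u t x‖ ≤ K)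
    (hIoc : ∀ p q, p ≤ q → ContinuousOn (fun t => ∫ x in Ioc p q, u t x) s)
    {h : ℝ → ℝ} (hh : h ∈ stepFunctions) :
    ContinuousOn (fun t => ∫ x, u t x * h x) s := by
  have hint : ∀ {h}, h ∈ stepFunctions → ∀ t ∈ s, Integrable fun x => u t x * h x :=
    fun hh t ht => (integrable_of_mem_stepFunctions hh).bdd_mul (hu t ht)
      (Eventually.of_forall (hK t ht))
  induction hh using Submodule.span_induction with
  | mem _ hmem =>
    obtain ⟨⟨p, q⟩, rfl⟩ := hmem
    simp_rw [← indicator_mul_right, Pi.one_apply, mul_one, integral_indicator measurableSet_Ioc]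
    rcases le_or_gt p q with hpq | hqp
    · exact hIoc p q hpq
    · simp only [Ioc_eq_empty_of_le hqp.le, Measure.restrict_empty, integral_zero_measure]
      exact continuousOn_const
  | zero => simpa using continuousOn_const
  | add h₁ h₂ hh₁ hh₂ ih₁ ih₂ =>
    refine (ih₁.add ih₂).congr fun t ht => ?_
    simp only [Pi.add_apply, mul_add]
    exact integral_add (hint hh₁ t ht) (hint hh₂ t ht)
  | smul c h _ ih =>
    simp only [Pi.smul_apply, smul_eq_mul, mul_left_comm _ c, integral_const_mul]
    exact continuousOn_const.mul ih

theorem continuousOn_integral_mul_of_integrable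
    (hu : ∀ t ∈ s, AEStronglyMeasurable (u t)) (hK : ∀ t ∈ s, ∀ x, ‖u t x‖ ≤ K)
    (hIoc : ∀ p q, p ≤ q → ContinuousOn (fun t => ∫ x in Ioc p q, u t x) s)
    {ψ : ℝ → ℝ} (hψ : Integrable ψ) :
    ContinuousOn (fun t => ∫ x, u t x * ψ x) s := by
  refine Metric.continuousOn_of_forall_dist_le fun ε hε => ?_
  obtain ⟨h, hh, hψh⟩ := hψ.exists_mem_stepFunctions_integral_norm_sub_le
    (show 0 < ε / (K + 1) by positivity)
  refine ⟨_, continuousOn_integral_mul_of_mem_stepFunctions hu hK hIoc hh, fun t ht => ?_⟩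
  have hψh_int : Integrable fun x => ψ x - h x := hψ.sub (integrable_of_mem_stepFunctions hh)
  rw [dist_eq_norm, ← integral_sub (hψ.bdd_mul (hu t ht) (.of_forall (hK t ht)))
    ((integrable_of_mem_stepFunctions hh).bdd_mul (hu t ht) (.of_forall (hK t ht)))]
  calc ‖∫ x, (u t x * ψ x - u t x * h x)‖ ≤ ∫ x, K * ‖ψ x - h x‖ := by
        refine norm_integral_le_of_norm_le (hψh_int.norm.const_mul _) (.of_forall fun x => ?_)
        rw [← mul_sub, norm_mul]
        exact mul_le_mul_of_nonneg_right (hK t ht x) (norm_nonneg _)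
    _ ≤ K * (ε / (K + 1)) := by
        rw [integral_const_mul]
        exact mul_le_mul_of_nonneg_left hψh K.coe_nonneg
    _ ≤ ε := mul_div_add_one_le K.coe_nonneg hε.le

theorem continuousOn_integral_mul_of_bounded
    (hint : ∀ t ∈ s, Integrable (u t)) (hK : ∀ t ∈ s, ∀ x, ‖u t x‖ ≤ K)
    (hIoc : ∀ p q, p ≤ q → ContinuousOn (fun t => ∫ x in Ioc p q, u t x) s)
    (htight : ∀ ε > 0, ∃ M, ∀ t ∈ s, ∫ x in (Ioc (-M) M)ᶜ, ‖u t x‖ ≤ ε)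
    {φ : ℝ → ℝ} (hφ : AEStronglyMeasurable φ) {B : ℝ} (hB : ∀ x, ‖φ x‖ ≤ B) :
    ContinuousOn (fun t => ∫ x, u t x * φ x) s := by
  have hB0 : 0 ≤ B := (norm_nonneg _).trans (hB 0)
  refine Metric.continuousOn_of_forall_dist_le fun ε hε => ?_
  obtain ⟨M, hM⟩ := htight (ε / (B + 1)) (by positivity)
  have hψ : Integrable ((Ioc (-M) M).indicator φ) :=
    (integrable_indicator_iff measurableSet_Ioc).2
      (Measure.integrableOn_of_bounded measure_Ioc_lt_top.ne hφ (.of_forall hB))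
  refine ⟨_, continuousOn_integral_mul_of_integrable (fun t ht => (hint t ht).1) hK hIoc hψ,
    fun t ht => ?_⟩
  have hφ_int : Integrable fun x => u t x * φ x :=
    (hint t ht).mul_bdd hφ (.of_forall hB)
  have hsplit : (∫ x, u t x * φ x) - ∫ x, u t x * (Ioc (-M) M).indicator φ x =
      ∫ x in (Ioc (-M) M)ᶜ, u t x * φ x := by
    rw [← integral_add_compl measurableSet_Ioc hφ_int]
    simp_rw [← indicator_mul_right, integral_indicator measurableSet_Ioc]
    ring
  rw [dist_eq_norm, hsplit]
  calc ‖∫ x in (Ioc (-M) M)ᶜ, u t x * φ x‖ ≤ ∫ x in (Ioc (-M) M)ᶜ, B * ‖u t x‖ := by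
        refine norm_integral_le_of_norm_le ((hint t ht).norm.const_mul B).restrict
          (.of_forall fun x => ?_)
        rw [norm_mul, mul_comm]
        exact mul_le_mul_of_nonneg_right (hB x) (norm_nonneg _)
    _ ≤ B * (ε / (B + 1)) := by
        rw [integral_const_mul]
        exact mul_le_mul_of_nonneg_left (hM t ht) hB0
    _ ≤ ε := mul_div_add_one_le hB0 hε.le

end WeakContinuity

structure IsLipschitzCDF (K : ℝ≥0) (C : ℝ) (f : ℝ → ℝ) : Prop where
  mono : Monotone f
  lipschitz : LipschitzWith K f
  tendsto_atBot : Tendsto f atBot (𝓝 0)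
  le_bound : ∀ x, f x ≤ C

theorem LipschitzWith.setIntegral_Ioc_deriv {f : ℝ → ℝ} {K : ℝ≥0} (hf : LipschitzWith K f)
    {p q : ℝ} (hpq : p ≤ q) : ∫ x in Ioc p q, deriv f x = f q - f p := by
  rw [← intervalIntegral.integral_of_le hpq]
  exact hf.lipschitzOnWith.absolutelyContinuousOnInterval.integral_deriv_eq_sub

namespace IsLipschitzCDF

variable {K : ℝ≥0} {C : ℝ} {f : ℝ → ℝ}

theorem of_tendstoUniformly {ι : Type*} {l : Filter ι} [l.NeBot] {F : ι → ℝ → ℝ}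
    (hF : ∀ i, IsLipschitzCDF K C (F i)) (hFf : TendstoUniformly F f l) :
    IsLipschitzCDF K C f where
  mono := isClosed_monotone.mem_of_tendsto (tendsto_pi_nhds.2 hFf.tendsto_at)
    (.of_forall fun i => (hF i).mono)
  lipschitz := (isClosed_setOfPred_lipschitzWith K).mem_of_tendsto
    (tendsto_pi_nhds.2 hFf.tendsto_at) (.of_forall fun i => (hF i).lipschitz)
  tendsto_atBot := hFf.tendsto_of_eventually_tendsto (.of_forall fun i => (hF i).tendsto_atBot)
    tendsto_const_nhds
  le_bound x := le_of_tendsto (hFf.tendsto_at x) (.of_forall fun i => (hF i).le_bound x)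

theorem nonneg (hf : IsLipschitzCDF K C f) (x : ℝ) : 0 ≤ f x :=
  hf.mono.le_of_tendsto hf.tendsto_atBot x

theorem norm_deriv (hf : IsLipschitzCDF K C f) (x : ℝ) : ‖deriv f x‖ = deriv f x :=
  Real.norm_of_nonneg hf.mono.deriv_nonneg

theorem intervalIntegral_deriv_le (hf : IsLipschitzCDF K C f) (a b : ℝ) :
    ∫ x in a..b, deriv f x ≤ C := by
  rw [hf.lipschitz.lipschitzOnWith.absolutelyContinuousOnInterval.integral_deriv_eq_sub]
  linarith [hf.le_bound b, hf.nonneg a]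

theorem integrable_deriv (hf : IsLipschitzCDF K C f) : Integrable (deriv f) := by
  refine integrable_of_intervalIntegral_norm_bounded C (fun n : ℕ => ?_)
    (tendsto_neg_atBot_iff.2 tendsto_natCast_atTop_atTop) tendsto_natCast_atTop_atTop
    (.of_forall fun n => ?_)
  · exact Measure.integrableOn_of_bounded measure_Ioc_lt_top.ne
      (measurable_deriv f).aestronglyMeasurable
      (.of_forall fun x => norm_deriv_le_of_lipschitz hf.lipschitz)
  · simpa only [hf.norm_deriv] using hf.intervalIntegral_deriv_le _ _

theorem integral_deriv_le (hf : IsLipschitzCDF K C f) : ∫ x, deriv f x ≤ C :=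
  le_of_tendsto' (intervalIntegral_tendsto_integral hf.integrable_deriv
    (tendsto_neg_atBot_iff.2 tendsto_natCast_atTop_atTop) tendsto_natCast_atTop_atTop)
    fun _ => hf.intervalIntegral_deriv_le _ _

theorem setIntegral_compl_Ioc_deriv_le (hf : IsLipschitzCDF K C f) {p q : ℝ} (hpq : p ≤ q) :
    ∫ x in (Ioc p q)ᶜ, deriv f x ≤ f p + (C - f q) := by
  have := integral_add_compl (s := Ioc p q) measurableSet_Ioc hf.integrable_deriv
  rw [hf.lipschitz.setIntegral_Ioc_deriv hpq] at this
  linarith [hf.integral_deriv_le]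

end IsLipschitzCDF

theorem continuousOn_integral_deriv_mul {X : Type*} [TopologicalSpace X] {s : Set X}
    {K : ℝ≥0} {C : ℝ} {U : X → ℝ → ℝ} (hU : ∀ t ∈ s, IsLipschitzCDF K C (U t))
    (hcont : ∀ x, ContinuousOn (fun t => U t x) s)
    (htight : ∀ δ > (0 : ℝ), ∃ M > (0 : ℝ), ∀ t ∈ s, U t (-M) + (C - U t M) < δ)
    {φ : ℝ → ℝ} (hφ : AEStronglyMeasurable φ) {B : ℝ} (hB : ∀ x, ‖φ x‖ ≤ B) :
    ContinuousOn (fun t => ∫ x, deriv (U t) x * φ x) s := by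
  refine continuousOn_integral_mul_of_bounded (fun t ht => (hU t ht).integrable_deriv)
    (fun t ht x => norm_deriv_le_of_lipschitz (hU t ht).lipschitz)
    (fun p q hpq => ((hcont q).sub (hcont p)).congr fun t ht =>
      (hU t ht).lipschitz.setIntegral_Ioc_deriv hpq)
    (fun ε hε => ?_) hφ hB
  obtain ⟨M, hM, hMt⟩ := htight ε hε
  refine ⟨M, fun t ht => ?_⟩
  simp only [(hU t ht).norm_deriv]
  exact ((hU t ht).setIntegral_compl_Ioc_deriv_le (by linarith)).trans (hMt t ht).le

theorem stmt_11_general (a b C : ℝ)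
    (Un : ℕ → ℝ → ℝ → ℝ) (U : ℝ → ℝ → ℝ)
    (hcont : ∀ n, ContinuousOn (fun p : ℝ × ℝ => Un n p.1 p.2)
      (Set.Icc a b ×ˢ (Set.univ : Set ℝ)))
    (hunif : TendstoUniformlyOn (fun (n : ℕ) (p : ℝ × ℝ) => Un n p.1 p.2)
      (fun p : ℝ × ℝ => U p.1 p.2) atTop (Set.Icc a b ×ˢ (Set.univ : Set ℝ)))
    (hmono : ∀ n, ∀ t ∈ Set.Icc a b, Monotone (Un n t))
    (hlip : ∀ n, ∀ t ∈ Set.Icc a b, LipschitzWith 1 (Un n t))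
    (hzero : ∀ n, ∀ t ∈ Set.Icc a b, Tendsto (Un n t) atBot (nhds 0))
    (hbound : ∀ n, ∀ t ∈ Set.Icc a b, ∀ x, Un n t x ≤ C)
    (htight : ∀ δ > (0 : ℝ), ∃ M > (0 : ℝ), ∀ t ∈ Set.Icc a b,
      U t (-M) + (C - U t M) < δ) :
    ContinuousOn (fun p : ℝ × ℝ => U p.1 p.2) (Set.Icc a b ×ˢ (Set.univ : Set ℝ)) ∧
    ∃ u : ℝ → ℝ → ℝ,
      (∀ t ∈ Set.Icc a b, Integrable (u t)) ∧
      (∀ t ∈ Set.Icc a b, ∀ᵐ x : ℝ, HasDerivAt (U t) (u t x) x) ∧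
      (∀ φ : ℝ → ℝ, Measurable φ → (∃ C' : ℝ, ∀ x, |φ x| ≤ C') →
        ContinuousOn (fun t => ∫ x, u t x * φ x) (Set.Icc a b)) := by
  have hUcont : ContinuousOn (fun p : ℝ × ℝ => U p.1 p.2) (Icc a b ×ˢ univ) :=
    hunif.continuousOn (Eventually.of_forall hcont).frequently
  have hU : ∀ t ∈ Icc a b, IsLipschitzCDF 1 C (U t) := fun t ht =>
    IsLipschitzCDF.of_tendstoUniformly
      (fun n => ⟨hmono n t ht, hlip n t ht, hzero n t ht, hbound n t ht⟩)
      (tendstoUniformlyOn_univ.1 (by simpa [Function.comp_def, ht] using hunif.comp (t, ·)))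
  refine ⟨hUcont, fun t => deriv (U t), fun t ht => (hU t ht).integrable_deriv,
    fun t ht => (hU t ht).lipschitz.ae_differentiableAt_real.mono fun x hx => hx.hasDerivAt, ?_⟩
  rintro φ hφ ⟨B, hB⟩
  exact continuousOn_integral_deriv_mul hU
    (fun x => hUcont.comp (Continuous.prodMk_left x).continuousOn fun t ht => ⟨ht, trivial⟩)
    htight hφ.aestronglyMeasurable hB

theorem stmt_11 (a b C : ℝ) (hab : a < b) (hC : 0 ≤ C)
    (Un : ℕ → ℝ → ℝ → ℝ) (U : ℝ → ℝ → ℝ)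
    (hcont : ∀ n, ContinuousOn (fun p : ℝ × ℝ => Un n p.1 p.2)
      (Set.Icc a b ×ˢ (Set.univ : Set ℝ)))
    (hunif : TendstoUniformlyOn (fun (n : ℕ) (p : ℝ × ℝ) => Un n p.1 p.2)
      (fun p : ℝ × ℝ => U p.1 p.2) atTop (Set.Icc a b ×ˢ (Set.univ : Set ℝ)))
    (hmono : ∀ n, ∀ t ∈ Set.Icc a b, Monotone (Un n t))
    (hlip : ∀ n, ∀ t ∈ Set.Icc a b, LipschitzWith 1 (Un n t))
    (hzero : ∀ n, ∀ t ∈ Set.Icc a b, Tendsto (Un n t) atBot (nhds 0))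
    (hbound : ∀ n, ∀ t ∈ Set.Icc a b, ∀ x, Un n t x ≤ C)
    (htight : ∀ δ > (0 : ℝ), ∃ M > (0 : ℝ), ∀ t ∈ Set.Icc a b,
      U t (-M) + (C - U t M) < δ) :
    ContinuousOn (fun p : ℝ × ℝ => U p.1 p.2) (Set.Icc a b ×ˢ (Set.univ : Set ℝ)) ∧
    ∃ u : ℝ → ℝ → ℝ,
      (∀ t ∈ Set.Icc a b, Integrable (u t)) ∧
      (∀ t ∈ Set.Icc a b, ∀ᵐ x : ℝ, HasDerivAt (U t) (u t x) x) ∧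
      (∀ φ : ℝ → ℝ, Measurable φ → (∃ C' : ℝ, ∀ x, |φ x| ≤ C') →
        ContinuousOn (fun t => ∫ x, u t x * φ x) (Set.Icc a b)) :=
  stmt_11_general a b C Un U hcont hunif hmono hlip hzero hbound htight
end

section
/- Let f : Ω × ℝ → ℝ be C² in the third variable with |∂_ω f| ≤ L and |∂_{ωω} f| ≤ L₂ uniformly, and fix (τ,y), (t,x) ∈ Ω. Define q(ω) = ∫₀^ω ∂_ω f(τ,y,s) ∂_ω f(t,x,s) ds and I(v,w) = (v−w)∫_w^v (∂_ω f(t,x,ω))² dω − (f(t,x,v) − f(t,x,w))². Then for all v, w ∈ [0,1]: (v−w)(q(v) − q(w)) ≥ I(v,w) + (f(t,x,v) − f(t,x,w))² − (2L + L₂) · sup_{ω∈[0,1]} |f(τ,y,ω) − f(t,x,ω)|. -/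
open intervalIntegral

/-!
Write `g = f(τ,y,·) − f(t,x,·)` and `h = f(t,x,·)`. The difference between the two sides is
`(v − w) ∫_w^v g' h'`, and integrating by parts moves the derivative off `g`:
`∫_w^v g' h' = [g h']_w^v − ∫_w^v g h''`. Both terms only see `g` itself, which is bounded by the
supremum `M` of `|g|` on `[0,1]`, so `|∫_w^v g' h'| ≤ (2L + L₂) M`, and `|v − w| ≤ 1` finishes.
-/

theorem abs_integral_deriv_mul_deriv_le {g h : ℝ → ℝ} {a b M L L₂ : ℝ}
    (hg : ContDiff ℝ 1 g) (hh : ContDiff ℝ 2 h)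
    (hgM : ∀ ω ∈ Set.uIcc a b, |g ω| ≤ M)
    (hh' : ∀ ω ∈ Set.uIcc a b, |deriv h ω| ≤ L)
    (hh'' : ∀ ω ∈ Set.uIcc a b, |deriv (deriv h) ω| ≤ L₂) :
    |∫ ω in a..b, deriv g ω * deriv h ω| ≤ (2 * L + L₂ * |b - a|) * M := by
  have hM : 0 ≤ M := (abs_nonneg _).trans (hgM a Set.left_mem_uIcc)
  have hh'C1 : ContDiff ℝ 1 (deriv h) := hh.deriv'
  have hparts : ∫ ω in a..b, g ω * deriv (deriv h) ω
      = g b * deriv h b - g a * deriv h a - ∫ ω in a..b, deriv g ω * deriv h ω :=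
    integral_mul_deriv_eq_deriv_mul
      (fun ω _ => (hg.differentiable one_ne_zero ω).hasDerivAt)
      (fun ω _ => (hh'C1.differentiable one_ne_zero ω).hasDerivAt)
      ((hg.continuous_deriv le_rfl).intervalIntegrable a b)
      ((hh'C1.continuous_deriv le_rfl).intervalIntegrable a b)
  have hboundary : ∀ ω ∈ Set.uIcc a b, |g ω * deriv h ω| ≤ M * L := fun ω hω => by
    rw [abs_mul]; exact mul_le_mul (hgM ω hω) (hh' ω hω) (abs_nonneg _) hM
  have hinterior : |∫ ω in a..b, g ω * deriv (deriv h) ω| ≤ M * L₂ * |b - a| := by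
    rw [← Real.norm_eq_abs]
    refine norm_integral_le_of_norm_le_const fun ω hω => ?_
    have hω' := Set.uIoc_subset_uIcc hω
    rw [Real.norm_eq_abs, abs_mul]
    exact mul_le_mul (hgM ω hω') (hh'' ω hω') (abs_nonneg _) hM
  have hb := hboundary b Set.right_mem_uIcc
  have ha := hboundary a Set.left_mem_uIcc
  calc |∫ ω in a..b, deriv g ω * deriv h ω|
      = |g b * deriv h b - g a * deriv h a - ∫ ω in a..b, g ω * deriv (deriv h) ω| := by
        rw [hparts, sub_sub_cancel]
    _ ≤ (2 * L + L₂ * |b - a|) * M := by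
      have hsplit₁ := abs_sub (g b * deriv h b - g a * deriv h a)
        (∫ ω in a..b, g ω * deriv (deriv h) ω)
      have hsplit₂ := abs_sub (g b * deriv h b) (g a * deriv h a)
      linarith

theorem le_ciSup_Icc_of_continuousOn {φ : ℝ → ℝ} {a b ω : ℝ}
    (hφ : ContinuousOn φ (Set.Icc a b)) (hω : ω ∈ Set.Icc a b) :
    φ ω ≤ ⨆ s : Set.Icc a b, φ s := by
  have hbdd := isCompact_Icc.bddAbove_image hφ
  rw [Set.image_eq_range] at hbdd
  exact le_ciSup hbdd ⟨ω, hω⟩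

theorem integral_deriv_mul_deriv_sub_integral_deriv_sq {G F : ℝ → ℝ} {a b : ℝ}
    (hG : ContDiff ℝ 1 G) (hF : ContDiff ℝ 1 F) :
    (∫ ω in a..b, deriv G ω * deriv F ω) - ∫ ω in a..b, deriv F ω ^ 2
      = ∫ ω in a..b, deriv (G - F) ω * deriv F ω := by
  have hG' := hG.continuous_deriv le_rfl
  have hF' := hF.continuous_deriv le_rfl
  rw [← integral_sub (f := fun ω => deriv G ω * deriv F ω) (g := fun ω => deriv F ω ^ 2)
    ((hG'.mul hF').intervalIntegrable a b) ((hF'.pow 2).intervalIntegrable a b)]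
  refine integral_congr fun ω _ => ?_
  rw [deriv_sub (hG.differentiable one_ne_zero ω) (hF.differentiable one_ne_zero ω)]
  ring

theorem neg_le_mul_of_abs_le_one {s d K : ℝ} (hs : |s| ≤ 1) (hd : |d| ≤ K) : -K ≤ s * d := by
  have h := neg_abs_le (s * d)
  rw [abs_mul] at h
  nlinarith [abs_nonneg s, abs_nonneg d]

theorem stmt_15_general (L L₂ : ℝ) (f : ℝ × ℝ → ℝ → ℝ)
    (hf : ∀ p : ℝ × ℝ, ContDiff ℝ 2 (f p))
    (hL : ∀ (p : ℝ × ℝ) (ω : ℝ), |deriv (f p) ω| ≤ L)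
    (hL₂ : ∀ (p : ℝ × ℝ) (ω : ℝ), |deriv (deriv (f p)) ω| ≤ L₂)
    (τ y t x : ℝ)
    (v w : ℝ) (hv : v ∈ Set.Icc (0:ℝ) 1) (hw : w ∈ Set.Icc (0:ℝ) 1) :
    ((v - w) * ∫ ω in w..v, deriv (f (τ, y)) ω * deriv (f (t, x)) ω) ≥
      ((v - w) * (∫ ω in w..v, (deriv (f (t, x)) ω) ^ 2) -
        (f (t, x) v - f (t, x) w) ^ 2) +
      (f (t, x) v - f (t, x) w) ^ 2 -
      (2 * L + L₂) * ⨆ ω : Set.Icc (0:ℝ) 1, |f (τ, y) ω - f (t, x) ω| := by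
  set F := f (t, x)
  set G := f (τ, y)
  set M := ⨆ ω : Set.Icc (0:ℝ) 1, |G ω - F ω|
  have hC1 : ∀ p, ContDiff ℝ 1 (f p) := fun p => (hf p).of_le one_le_two
  have hM : ∀ ω ∈ Set.Icc (0:ℝ) 1, |(G - F) ω| ≤ M := fun ω hω =>
    le_ciSup_Icc_of_continuousOn ((hC1 _).sub (hC1 _)).continuous.abs.continuousOn hω
  have hM0 : 0 ≤ M := (abs_nonneg _).trans (hM 0 ⟨le_rfl, zero_le_one⟩)
  have hL₂0 : 0 ≤ L₂ := (abs_nonneg _).trans (hL₂ (t, x) 0)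
  have hvw : |v - w| ≤ 1 := abs_sub_le_iff.mpr ⟨by linarith [hv.2, hw.1], by linarith [hv.1, hw.2]⟩
  have hD : |∫ ω in w..v, deriv (G - F) ω * deriv F ω| ≤ (2 * L + L₂) * M := by
    refine (abs_integral_deriv_mul_deriv_le ((hC1 _).sub (hC1 _)) (hf (t, x))
      (fun ω hω => hM ω (Set.uIcc_subset_Icc hw hv hω))
      (fun ω _ => hL (t, x) ω) (fun ω _ => hL₂ (t, x) ω)).trans ?_
    gcongr
    exact mul_le_of_le_one_right hL₂0 hvw
  have hlower := neg_le_mul_of_abs_le_one hvw hD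
  rw [← integral_deriv_mul_deriv_sub_integral_deriv_sq (hC1 _) (hC1 _), mul_sub] at hlower
  linarith

theorem stmt_15 (T L L₂ : ℝ) (f : ℝ × ℝ → ℝ → ℝ)
    (hf : ∀ p : ℝ × ℝ, ContDiff ℝ 2 (f p))
    (hL : ∀ (p : ℝ × ℝ) (ω : ℝ), |deriv (f p) ω| ≤ L)
    (hL₂ : ∀ (p : ℝ × ℝ) (ω : ℝ), |deriv (deriv (f p)) ω| ≤ L₂)
    (τ y t x : ℝ) (hτ : (τ, y) ∈ Set.Ioo 0 T ×ˢ (Set.univ : Set ℝ))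
    (ht : (t, x) ∈ Set.Ioo 0 T ×ˢ (Set.univ : Set ℝ))
    (v w : ℝ) (hv : v ∈ Set.Icc (0:ℝ) 1) (hw : w ∈ Set.Icc (0:ℝ) 1) :
    ((v - w) * ∫ ω in w..v, deriv (f (τ, y)) ω * deriv (f (t, x)) ω) ≥
      ((v - w) * (∫ ω in w..v, (deriv (f (t, x)) ω) ^ 2) -
        (f (t, x) v - f (t, x) w) ^ 2) +
      (f (t, x) v - f (t, x) w) ^ 2 -
      (2 * L + L₂) * ⨆ ω : Set.Icc (0:ℝ) 1, |f (τ, y) ω - f (t, x) ω| :=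
  stmt_15_general L L₂ f hf hL hL₂ τ y t x v w hv hw
end
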